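/- Let Φ and Ψ be locally finite sets of points in ℝ² such that Φ is (σ,ρ,ν)-ring regulated about every y ∈ Ψ, every x ∈ Φ satisfies ‖x − y‖ > r₀ for all y ∈ Ψ, let ℓ be a path-loss function as in the context, γ₀ > 0, m > 0, and let η₀ > 0 and α ∈ (0,1) satisfy α/η₀ > σ_β. Assume Ψ is τ₀-void regulated with respect to Φ, i.e., for every x ∈ Φ there exists y ∈ Ψ with ‖x − y‖ ≤ τ₀. Then for every x ∈ Φ, the cell-free decoding delay satisfies inf_{y ∈ Ψ} D(x − y, Φ − y) ≤ m / log₂(1 + η₀), where Φ − y = {w − y : w ∈ Φ}. -/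

import Mathlib

open MeasureTheory Set

noncomputable section

abbrev Plane : Type := EuclideanSpace ℝ (Fin 2)

/-- `Φ` is `(σ,ρ,ν)`-ring regulated about the point `y`. -/
def RingRegulatedAbout (Φ : Set Plane) (y : Plane) (σ ρ ν : ℝ) : Prop :=
  ∀ r R : ℝ, 0 ≤ r → r < R →
    ((Φ ∩ {z : Plane | r < ‖z - y‖ ∧ ‖z - y‖ < R}).ncard : ℝ)
      ≤ σ + ρ * (R - r) + ν * (R ^ 2 - r ^ 2)

/-- The tail interference at the origin from points of `Φ` at distance greater than `r`. -/
def tailInterference (ℓ : ℝ → ℝ) (Φ : Set Plane) (r : ℝ) : ℝ :=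
  ∑' w : {w : Plane // w ∈ Φ ∧ r < ‖w‖}, ℓ ‖(w : Plane)‖

/-- The signal-to-residual-interference-plus-noise ratio of the transmitter at `x`
with respect to the receiver at the origin, under successive interference cancellation. -/
def SrINR (ℓ : ℝ → ℝ) (γ₀ : ℝ) (Φ : Set Plane) (x : Plane) : ℝ :=
  ℓ ‖x‖ / (tailInterference ℓ Φ ‖x‖ + γ₀)

/-- The coverage distance lower bound `τ₀`. -/
def tau0 (C' γ₀ β σβ ρβ νβ η₀ α : ℝ) : ℝ :=
  min ((Real.sqrt (ρβ ^ 2 + 4 * νβ * (α / η₀ - σβ)) - ρβ) / (2 * νβ))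
    ((C' * (1 - α) / (η₀ * γ₀)) ^ (1 / β))

/-- The rate of the link from `x` to the typical receiver at the origin:
the infimum over the transmitters `w ∈ Φ` with `‖w‖ ≤ ‖x‖` of `log₂(1 + SrINR(w,Φ))`. -/
def rate (ℓ : ℝ → ℝ) (γ₀ : ℝ) (Φ : Set Plane) (x : Plane) : ℝ :=
  sInf ((fun w => Real.logb 2 (1 + SrINR ℓ γ₀ Φ w)) '' {w ∈ Φ | ‖w‖ ≤ ‖x‖})

/-- The virtual decoding delay of a message of `m` bits from `x` to the typical receiver. -/
def vDelay (ℓ : ℝ → ℝ) (γ₀ m : ℝ) (Φ : Set Plane) (x : Plane) : ℝ :=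
  m / rate ℓ γ₀ Φ x

/-- The SIC decoding delay from `x` to the typical receiver: the supremum of the virtual
decoding delays over the transmitters `w ∈ Φ` with higher received power, i.e. `‖w‖ ≤ ‖x‖`. -/
def sicDelay (ℓ : ℝ → ℝ) (γ₀ m : ℝ) (Φ : Set Plane) (x : Plane) : ℝ :=
  sSup ((fun w => vDelay ℓ γ₀ m Φ w) '' {w ∈ Φ | ‖w‖ ≤ ‖x‖})

/-- The cell-free SIC decoding delay of the transmitter at `x`: the infimum over the
receivers `y ∈ Ψ` of the SIC decoding delay of `x - y` for the translated set `Φ - y`. -/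
def cfDelay (ℓ : ℝ → ℝ) (γ₀ m : ℝ) (Φ Ψ : Set Plane) (x : Plane) : ℝ :=
  sInf ((fun y => sicDelay ℓ γ₀ m ((fun w => w - y) '' Φ) (x - y)) '' Ψ)

/-!
Fix `x ∈ Φ` and a receiver `y ∈ Ψ` with `‖x - y‖ ≤ τ₀`, and work in coordinates centred at `y`.
It suffices that every transmitter `u` with `‖u‖ ≤ τ₀` has `SrINR ≥ η₀`, since then every rate
entering `D(x - y)` is at least `log₂(1 + η₀)`. With `t = ‖u‖ > r₀`, ring regulation bounds the
number of interferers within distance `M` by `σ + ρ (M - t) + ν (M² - t²)`, and an Abel summation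
against this counting bound gives the residual interference
`I(t) ≤ σ ℓ(t) + ∫_t^∞ C r^(-β) d(ρ r + ν r²) ≤ (σ_β + ρ_β t + ν_β t²) ℓ(t)`.
The first term of `τ₀` makes this at most `(α / η₀) ℓ(t)`, the second makes `η₀ γ₀ ≤ (1 - α) ℓ(t)`.
-/

theorem rpow_neg_mul_rpow_sub_rpow_le {a b p β : ℝ} (ha : 0 < a) (hab : a ≤ b) (hp : 0 < p)
    (hpβ : p < β) :
    b ^ (-β) * (b ^ p - a ^ p) ≤ p / (β - p) * (a ^ (p - β) - b ^ (p - β)) := by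
  have hpos : ∀ x ∈ uIcc a b, 0 < x := fun x hx =>
    ha.trans_le (by rw [uIcc_of_le hab] at hx; exact hx.1)
  have h0 : (0 : ℝ) ∉ uIcc a b := fun h => (hpos 0 h).false
  have hmono : ∫ x in a..b, b ^ (-β) * x ^ (p - 1) ≤ ∫ x in a..b, x ^ (p - 1 - β) := by
    refine intervalIntegral.integral_mono_on hab ?_ ?_ fun x hx => ?_
    · exact (intervalIntegral.intervalIntegrable_rpow' (by linarith)).const_mul _
    · exact intervalIntegral.intervalIntegrable_rpow (Or.inr h0)
    have hx0 : 0 < x := hpos x (by rw [uIcc_of_le hab]; exact hx)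
    rw [show p - 1 - β = -β + (p - 1) by ring, Real.rpow_add hx0]
    exact mul_le_mul_of_nonneg_right (Real.rpow_le_rpow_of_nonpos hx0 hx.2 (by linarith))
      (Real.rpow_nonneg hx0.le _)
  have hβp : 0 < β - p := by linarith
  rw [intervalIntegral.integral_const_mul, integral_rpow (Or.inl (by linarith)),
    integral_rpow (Or.inr ⟨by linarith, h0⟩), sub_add_cancel, sub_right_comm, sub_add_cancel,
    ← neg_div_neg_eq (b ^ (p - β) - _), neg_sub, neg_sub, ← mul_div_assoc,
    div_le_div_iff₀ hp hβp] at hmono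
  rw [div_mul_eq_mul_div, le_div_iff₀ hβp]
  linarith

/-- `∫_x^∞ C r^(-β) d(ρ r + ν r²)`. -/
def interferenceTailBound (C ρ ν β x : ℝ) : ℝ :=
  C * (ρ / (β - 1) * x ^ (1 - β) + 2 * ν / (β - 2) * x ^ (2 - β))

theorem interferenceTailBound_nonneg {C ρ ν β x : ℝ} (hC : 0 ≤ C) (hρ : 0 ≤ ρ) (hν : 0 ≤ ν)
    (hβ : 2 < β) (hx : 0 ≤ x) : 0 ≤ interferenceTailBound C ρ ν β x := by
  have hβ₁ : 0 < β - 1 := by linarith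
  have hβ₂ : 0 < β - 2 := by linarith
  unfold interferenceTailBound
  positivity

theorem mul_sub_le_interferenceTailBound_sub {C ρ ν β a b : ℝ} (hC : 0 ≤ C) (hρ : 0 ≤ ρ)
    (hν : 0 ≤ ν) (hβ : 2 < β) (ha : 0 < a) (hab : a ≤ b) :
    C * b ^ (-β) * (ρ * (b - a) + ν * (b ^ 2 - a ^ 2)) ≤
      interferenceTailBound C ρ ν β a - interferenceTailBound C ρ ν β b := by
  have h₁ := rpow_neg_mul_rpow_sub_rpow_le (p := 1) (β := β) ha hab one_pos (by linarith)
  have h₂ := rpow_neg_mul_rpow_sub_rpow_le (p := 2) (β := β) ha hab two_pos hβ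
  rw [Real.rpow_one, Real.rpow_one] at h₁
  rw [Real.rpow_two, Real.rpow_two] at h₂
  have e₁ := mul_le_mul_of_nonneg_left h₁ (mul_nonneg hC hρ)
  have e₂ := mul_le_mul_of_nonneg_left h₂ (mul_nonneg hC hν)
  unfold interferenceTailBound
  linear_combination e₁ + e₂

section Abel

variable {ι : Type*} (g : ι → ℝ) (f N H : ℝ → ℝ) (t : ℝ)

/-- `H` plays the role of `∫_·^∞ f dN`: `hH` says it dominates every Stieltjes increment. -/
theorem sum_comp_le_of_card_le (hg : ∀ i, t ≤ g i)
    (hcard : ∀ (s : Finset ι) (M : ℝ), t ≤ M → (∀ i ∈ s, g i ≤ M) → (s.card : ℝ) ≤ N M)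
    (hf : AntitoneOn f (Ici t)) (hf0 : ∀ x, t ≤ x → 0 ≤ f x)
    (hH : ∀ a b, t ≤ a → a ≤ b → f b * (N b - N a) ≤ H a - H b) (hH0 : ∀ x, t ≤ x → 0 ≤ H x)
    (s : Finset ι) :
    ∑ i ∈ s, f (g i) ≤ N t * f t + H t := by
  classical
  have key : ∀ M, t ≤ M → (∀ i ∈ s, g i ≤ M) →
      ∑ i ∈ s, f (g i) + N M * f M + H M ≤ N t * f t + H t + s.card * f M := by
    induction s using Finset.induction_on_max_value g with
    | empty =>
      intro M htM _
      rw [Finset.sum_empty, Finset.card_empty, Nat.cast_zero, zero_mul]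
      have hNt : 0 ≤ N t := by simpa using hcard ∅ t le_rfl (by simp)
      have := mul_le_mul_of_nonneg_left (hf (mem_Ici.2 le_rfl) htM htM) hNt
      linarith [hH t M le_rfl htM]
    | insert a s ha hmax ih =>
      intro M htM hsM
      have hr := hsM a (Finset.mem_insert_self a s)
      have hcount := hcard (insert a s) (g a) (hg a) (by simpa using hmax)
      rw [Finset.card_insert_of_notMem ha, Nat.cast_succ] at hcount ⊢
      have hfar := hf (hg a) htM hr
      have := mul_nonneg (sub_nonneg.2 hcount) (sub_nonneg.2 hfar)
      rw [Finset.sum_insert ha]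
      linarith [ih (g a) (hg a) hmax, hH (g a) M (hg a) hr]
  obtain ⟨M, hM⟩ := (s.image g).bddAbove
  have htM : t ≤ max t M := le_max_left t M
  have hsM : ∀ i ∈ s, g i ≤ max t M := fun i hi =>
    (hM (Finset.mem_coe.2 (Finset.mem_image_of_mem g hi))).trans (le_max_right t M)
  have := mul_le_mul_of_nonneg_right (hcard s _ htM hsM) (hf0 _ htM)
  linarith [key _ htM hsM, hH0 _ htM]

theorem tsum_comp_le_of_card_le (hg : ∀ i, t ≤ g i)
    (hcard : ∀ (s : Finset ι) (M : ℝ), t ≤ M → (∀ i ∈ s, g i ≤ M) → (s.card : ℝ) ≤ N M)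
    (hf : AntitoneOn f (Ici t)) (hf0 : ∀ x, t ≤ x → 0 ≤ f x)
    (hH : ∀ a b, t ≤ a → a ≤ b → f b * (N b - N a) ≤ H a - H b) (hH0 : ∀ x, t ≤ x → 0 ≤ H x) :
    ∑' i, f (g i) ≤ N t * f t + H t :=
  Real.tsum_le_of_sum_le (fun i => hf0 _ (hg i))
    (sum_comp_le_of_card_le g f N H t hg hcard hf hf0 hH hH0)

end Abel

theorem finite_inter_closedBall_image_sub {E : Type*} [SeminormedAddCommGroup E] {Φ : Set E}
    (hloc : ∀ R : ℝ, (Φ ∩ Metric.closedBall 0 R).Finite) (y : E) (R : ℝ) :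
    ((· - y) '' Φ ∩ Metric.closedBall 0 R).Finite := by
  refine ((hloc (R + ‖y‖)).image (· - y)).subset ?_
  rintro _ ⟨⟨z, hz, rfl⟩, hzR⟩
  refine ⟨z, ⟨hz, ?_⟩, rfl⟩
  rw [mem_closedBall_zero_iff] at hzR ⊢
  linarith [norm_le_insert' z y]

theorem RingRegulatedAbout.image_sub {Φ : Set Plane} {y : Plane} {σ ρ ν : ℝ}
    (hreg : RingRegulatedAbout Φ y σ ρ ν) : RingRegulatedAbout ((· - y) '' Φ) 0 σ ρ ν := by
  intro r R hr hrR
  rw [← image_inter_preimage, ncard_image_of_injective _ sub_left_injective]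
  simpa only [preimage_ofPred_eq, sub_zero] using hreg r R hr hrR

theorem RingRegulatedAbout.card_le {Φ : Set Plane} {σ ρ ν t M : ℝ}
    (hreg : RingRegulatedAbout Φ 0 σ ρ ν) (hloc : ∀ R : ℝ, (Φ ∩ Metric.closedBall 0 R).Finite)
    (ht : 0 ≤ t) (htM : t ≤ M) {s : Finset Plane} (hs : ∀ z ∈ s, z ∈ Φ ∧ t < ‖z‖ ∧ ‖z‖ ≤ M) :
    (s.card : ℝ) ≤ σ + ρ * (M - t) + ν * (M ^ 2 - t ^ 2) := by
  have hR : ∀ R ∈ Ioi M, (s.card : ℝ) ≤ σ + ρ * (R - t) + ν * (R ^ 2 - t ^ 2) := by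
    intro R hR
    have hsub : (s : Set Plane) ⊆ Φ ∩ {z : Plane | t < ‖z - 0‖ ∧ ‖z - 0‖ < R} := fun z hz => by
      obtain ⟨hzΦ, htz, hzM⟩ := hs z hz
      simpa using ⟨hzΦ, htz, hzM.trans_lt hR⟩
    have hfin : (Φ ∩ {z : Plane | t < ‖z - 0‖ ∧ ‖z - 0‖ < R}).Finite :=
      (hloc R).subset fun z hz => ⟨hz.1, by simpa using hz.2.2.le⟩
    calc (s.card : ℝ) = (s : Set Plane).ncard := by rw [ncard_coe_finset]
      _ ≤ (Φ ∩ {z : Plane | t < ‖z - 0‖ ∧ ‖z - 0‖ < R}).ncard := by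
        exact_mod_cast ncard_le_ncard hsub hfin
      _ ≤ _ := hreg t R ht (htM.trans_lt hR)
  have hcont : Continuous fun R : ℝ => σ + ρ * (R - t) + ν * (R ^ 2 - t ^ 2) := by fun_prop
  exact ge_of_tendsto (hcont.tendsto M |>.mono_left nhdsWithin_le_nhds)
    (eventually_nhdsWithin_of_forall hR)

theorem tailInterference_le {Φ : Set Plane} {σ ρ ν C β r₀ t : ℝ} {ℓ : ℝ → ℝ}
    (hloc : ∀ R : ℝ, (Φ ∩ Metric.closedBall 0 R).Finite) (hreg : RingRegulatedAbout Φ 0 σ ρ ν)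
    (hρ : 0 ≤ ρ) (hν : 0 ≤ ν) (hC : 0 ≤ C) (hβ : 2 < β) (hℓ0 : ∀ r, 0 ≤ ℓ r)
    (hℓanti : AntitoneOn ℓ (Ici 0)) (hℓub : ∀ r, r₀ < r → ℓ r ≤ C * r ^ (-β))
    (ht : 0 < t) (hr₀t : r₀ < t) :
    tailInterference ℓ Φ t ≤ σ * ℓ t + interferenceTailBound C ρ ν β t := by
  refine (tsum_comp_le_of_card_le (fun w : {w : Plane // w ∈ Φ ∧ t < ‖w‖} => ‖(w : Plane)‖) ℓ
    (fun M => σ + ρ * (M - t) + ν * (M ^ 2 - t ^ 2))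
    (interferenceTailBound C ρ ν β) t (fun w => w.2.2.le) ?_
    (hℓanti.mono (Ici_subset_Ici.2 ht.le)) (fun x _ => hℓ0 x) ?_
    (fun x htx => interferenceTailBound_nonneg hC hρ hν hβ (ht.le.trans htx))).trans_eq (by ring)
  · intro s M htM hsM
    rw [← Finset.card_map (Function.Embedding.subtype _)]
    refine hreg.card_le hloc ht.le htM fun z hz => ?_
    obtain ⟨w, hw, rfl⟩ := Finset.mem_map.1 hz
    exact ⟨w.2.1, w.2.2, hsM w hw⟩
  · intro a b hta hab
    have hNab : 0 ≤ ρ * (b - a) + ν * (b ^ 2 - a ^ 2) :=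
      add_nonneg (mul_nonneg hρ (sub_nonneg.2 hab))
        (mul_nonneg hν (sub_nonneg.2 (pow_le_pow_left₀ (ht.le.trans hta) hab 2)))
    calc ℓ b * ((σ + ρ * (b - t) + ν * (b ^ 2 - t ^ 2)) - (σ + ρ * (a - t) + ν * (a ^ 2 - t ^ 2)))
        = ℓ b * (ρ * (b - a) + ν * (b ^ 2 - a ^ 2)) := by ring
      _ ≤ C * b ^ (-β) * (ρ * (b - a) + ν * (b ^ 2 - a ^ 2)) :=
        mul_le_mul_of_nonneg_right (hℓub b (by linarith)) hNab
      _ ≤ _ := mul_sub_le_interferenceTailBound_sub hC hρ hν hβ (ht.trans_le hta) hab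

theorem add_mul_sq_le_of_le_quadratic_root {a b δ t : ℝ} (ha : 0 ≤ a) (hb : 0 ≤ b) (hδ : 0 < δ)
    (ht : 0 < t) (htle : t ≤ (Real.sqrt (a ^ 2 + 4 * b * δ) - a) / (2 * b)) :
    a * t + b * t ^ 2 ≤ δ := by
  rcases hb.eq_or_lt with rfl | hb
  · simp only [mul_zero, div_zero] at htle
    exact absurd htle ht.not_ge
  rw [le_div_iff₀ (by positivity)] at htle
  have hroot : 2 * b * t + a ≤ Real.sqrt (a ^ 2 + 4 * b * δ) := by linarith
  have hsq := pow_le_pow_left₀ (by positivity) hroot 2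
  rw [Real.sq_sqrt (by positivity)] at hsq
  nlinarith

theorem le_mul_rpow_neg_of_le_rpow_one_div {A c β t : ℝ} (hA : 0 < A) (hc : 0 < c) (hβ : 0 < β)
    (ht : 0 < t) (htA : t ≤ (A / c) ^ (1 / β)) :
    c ≤ A * t ^ (-β) := by
  rw [one_div, Real.le_rpow_inv_iff_of_pos ht.le (by positivity) hβ, le_div_iff₀ hc] at htA
  rw [Real.rpow_neg ht.le, ← div_eq_mul_inv, le_div_iff₀ (by positivity)]
  linarith

theorem le_SrINR_of_norm_le_tau0 {Φ : Set Plane} {σ ρ ν C C' β r₀ γ₀ η₀ α : ℝ} {ℓ : ℝ → ℝ}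
    (hloc : ∀ R : ℝ, (Φ ∩ Metric.closedBall 0 R).Finite) (hreg : RingRegulatedAbout Φ 0 σ ρ ν)
    (hρ : 0 ≤ ρ) (hν : 0 ≤ ν) (hℓ0 : ∀ r, 0 ≤ ℓ r) (hℓanti : AntitoneOn ℓ (Ici 0))
    (hC' : 0 < C') (hCC' : C' ≤ C) (hr₀ : 0 < r₀) (hβ : 2 < β)
    (hℓlb : ∀ r, r₀ < r → C' * r ^ (-β) ≤ ℓ r) (hℓub : ∀ r, r₀ < r → ℓ r ≤ C * r ^ (-β))
    (hγ₀ : 0 < γ₀) (hη₀ : 0 < η₀) (hα1 : α < 1) (hαη : σ < α / η₀) {u : Plane}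
    (hr₀u : r₀ < ‖u‖)
    (huτ : ‖u‖ ≤ tau0 C' γ₀ β σ ((C / C') * (ρ / (β - 1))) ((C / C') * (2 * ν / (β - 2))) η₀ α) :
    η₀ ≤ SrINR ℓ γ₀ Φ u := by
  set t := ‖u‖
  set ρβ := (C / C') * (ρ / (β - 1))
  set νβ := (C / C') * (2 * ν / (β - 2))
  have ht : 0 < t := hr₀.trans hr₀u
  have hC : 0 ≤ C := hC'.le.trans hCC'
  have hρβ : 0 ≤ ρβ := mul_nonneg (by positivity) (div_nonneg hρ (by linarith))
  have hνβ : 0 ≤ νβ := mul_nonneg (by positivity) (div_nonneg (by positivity) (by linarith))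
  have hℓt : 0 ≤ ℓ t := hℓ0 t
  have hsignal : C' * t ^ (-β) ≤ ℓ t := hℓlb t hr₀u
  have hquad : ρβ * t + νβ * t ^ 2 ≤ α / η₀ - σ :=
    add_mul_sq_le_of_le_quadratic_root hρβ hνβ (sub_pos.2 hαη) ht (huτ.trans (min_le_left _ _))
  have hnoise : η₀ * γ₀ ≤ C' * (1 - α) * t ^ (-β) :=
    le_mul_rpow_neg_of_le_rpow_one_div (mul_pos hC' (sub_pos.2 hα1)) (mul_pos hη₀ hγ₀)
      (by linarith) ht (huτ.trans (min_le_right _ _))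
  have hpow : interferenceTailBound C ρ ν β t = (ρβ * t + νβ * t ^ 2) * (C' * t ^ (-β)) := by
    rw [interferenceTailBound, show 1 - β = -β + 1 by ring, show 2 - β = -β + 2 by ring,
      Real.rpow_add ht, Real.rpow_add ht, Real.rpow_one, Real.rpow_two]
    simp only [ρβ, νβ]
    field_simp
  have hinterference : η₀ * tailInterference ℓ Φ t ≤ α * ℓ t := by
    calc η₀ * tailInterference ℓ Φ t
        ≤ η₀ * (σ * ℓ t + (ρβ * t + νβ * t ^ 2) * ℓ t) := by
          gcongr
          calc tailInterference ℓ Φ t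
              ≤ σ * ℓ t + interferenceTailBound C ρ ν β t :=
                tailInterference_le hloc hreg hρ hν hC hβ hℓ0 hℓanti hℓub ht hr₀u
            _ ≤ σ * ℓ t + (ρβ * t + νβ * t ^ 2) * ℓ t := by
                rw [hpow]
                gcongr
      _ = η₀ * ((σ + (ρβ * t + νβ * t ^ 2)) * ℓ t) := by ring
      _ ≤ η₀ * (α / η₀ * ℓ t) := by
          gcongr
          linarith
      _ = α * ℓ t := by field_simp
  have hI0 : 0 ≤ tailInterference ℓ Φ t := tsum_nonneg fun _ => hℓ0 _
  rw [SrINR, le_div_iff₀ (by positivity), mul_add]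
  linarith [mul_le_mul_of_nonneg_left hsignal (sub_pos.2 hα1).le]

section Delay

variable {ℓ : ℝ → ℝ} {γ₀ m : ℝ} {Φ : Set Plane}

theorem SrINR_nonneg (hℓ0 : ∀ r, 0 ≤ ℓ r) (hγ₀ : 0 ≤ γ₀) (w : Plane) :
    0 ≤ SrINR ℓ γ₀ Φ w :=
  div_nonneg (hℓ0 _) (add_nonneg (tsum_nonneg fun _ => hℓ0 _) hγ₀)

theorem sicDelay_nonneg (hℓ0 : ∀ r, 0 ≤ ℓ r) (hγ₀ : 0 ≤ γ₀) (hm : 0 ≤ m) (x : Plane) :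
    0 ≤ sicDelay ℓ γ₀ m Φ x := by
  refine Real.sSup_nonneg ?_
  rintro _ ⟨w, -, rfl⟩
  refine div_nonneg hm (Real.sInf_nonneg ?_)
  rintro _ ⟨u, -, rfl⟩
  exact Real.logb_nonneg one_lt_two (by linarith [SrINR_nonneg (Φ := Φ) hℓ0 hγ₀ u])

theorem sicDelay_le_of_le_SrINR {η₀ : ℝ} (hη₀ : 0 < η₀) (hm : 0 ≤ m) {x : Plane}
    (h : ∀ u ∈ Φ, ‖u‖ ≤ ‖x‖ → η₀ ≤ SrINR ℓ γ₀ Φ u) :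
    sicDelay ℓ γ₀ m Φ x ≤ m / Real.logb 2 (1 + η₀) := by
  have hlog : 0 < Real.logb 2 (1 + η₀) := Real.logb_pos one_lt_two (by linarith)
  refine Real.sSup_le ?_ (div_nonneg hm hlog.le)
  rintro _ ⟨w, ⟨hw, hwx⟩, rfl⟩
  refine div_le_div_of_nonneg_left hm hlog (le_csInf ⟨_, w, ⟨hw, le_rfl⟩, rfl⟩ ?_)
  rintro _ ⟨u, ⟨hu, huw⟩, rfl⟩
  exact Real.logb_le_logb_of_le one_lt_two (by linarith) (by linarith [h u hu (huw.trans hwx)])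

theorem cfDelay_le_sicDelay (hℓ0 : ∀ r, 0 ≤ ℓ r) (hγ₀ : 0 ≤ γ₀) (hm : 0 ≤ m) {Ψ : Set Plane}
    {x y : Plane} (hy : y ∈ Ψ) :
    cfDelay ℓ γ₀ m Φ Ψ x ≤ sicDelay ℓ γ₀ m ((· - y) '' Φ) (x - y) :=
  csInf_le ⟨0, by rintro _ ⟨z, -, rfl⟩; exact sicDelay_nonneg hℓ0 hγ₀ hm _⟩ ⟨y, hy, rfl⟩

end Delay

theorem stmt7_general (Φ Ψ : Set Plane) (σ ρ ν : ℝ)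
    (hρ : 0 ≤ ρ) (hν : 0 ≤ ν)
    (hloc : ∀ R : ℝ, (Φ ∩ Metric.closedBall 0 R).Finite)
    (hreg : ∀ y ∈ Ψ, RingRegulatedAbout Φ y σ ρ ν)
    (ℓ : ℝ → ℝ) (hℓ0 : ∀ r, 0 ≤ ℓ r)
    (hℓanti : AntitoneOn ℓ (Set.Ici 0))
    (C C' r₀ β : ℝ) (hC' : 0 < C') (hCC' : C' ≤ C) (hr₀ : 0 < r₀) (hβ : 2 < β)
    (hℓlb : ∀ r, r₀ < r → C' * r ^ (-β) ≤ ℓ r)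
    (hℓub : ∀ r, r₀ < r → ℓ r ≤ C * r ^ (-β))
    (hΦr₀ : ∀ x ∈ Φ, ∀ y ∈ Ψ, r₀ < ‖x - y‖)
    (γ₀ : ℝ) (hγ₀ : 0 < γ₀) (m : ℝ) (hm : 0 < m)
    (η₀ α : ℝ) (hη₀ : 0 < η₀) (hα1 : α < 1)
    (hαη : σ < α / η₀)
    (hvoid : ∀ x ∈ Φ, ∃ y ∈ Ψ,
      ‖x - y‖ ≤ tau0 C' γ₀ β σ ((C / C') * (ρ / (β - 1)))
        ((C / C') * (2 * ν / (β - 2))) η₀ α) :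
    ∀ x ∈ Φ, cfDelay ℓ γ₀ m Φ Ψ x ≤ m / Real.logb 2 (1 + η₀) := by
  intro x hx
  obtain ⟨y, hy, hxy⟩ := hvoid x hx
  refine (cfDelay_le_sicDelay hℓ0 hγ₀.le hm.le hy).trans (sicDelay_le_of_le_SrINR hη₀ hm.le ?_)
  rintro _ ⟨w, hw, rfl⟩ hwx
  exact le_SrINR_of_norm_le_tau0 (finite_inter_closedBall_image_sub hloc y) (hreg y hy).image_sub
    hρ hν hℓ0 hℓanti hC' hCC' hr₀ hβ hℓlb hℓub hγ₀ hη₀ hα1 hαη (hΦr₀ w hw y hy) (hwx.trans hxy)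

theorem stmt7 (Φ Ψ : Set Plane) (σ ρ ν : ℝ)
    (hσ : 0 ≤ σ) (hρ : 0 ≤ ρ) (hν : 0 ≤ ν)
    (hloc : ∀ R : ℝ, (Φ ∩ Metric.closedBall 0 R).Finite)
    (hreg : ∀ y ∈ Ψ, RingRegulatedAbout Φ y σ ρ ν)
    (ℓ : ℝ → ℝ) (hℓ0 : ∀ r, 0 ≤ ℓ r)
    (hℓanti : AntitoneOn ℓ (Set.Ici 0))
    (hℓbdd : BddAbove (ℓ '' Set.Ici 0))
    (C C' r₀ β : ℝ) (hC' : 0 < C') (hCC' : C' ≤ C) (hr₀ : 0 < r₀) (hβ : 2 < β)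
    (hℓlb : ∀ r, r₀ < r → C' * r ^ (-β) ≤ ℓ r)
    (hℓub : ∀ r, r₀ < r → ℓ r ≤ C * r ^ (-β))
    (hΦr₀ : ∀ x ∈ Φ, ∀ y ∈ Ψ, r₀ < ‖x - y‖)
    (γ₀ : ℝ) (hγ₀ : 0 < γ₀) (m : ℝ) (hm : 0 < m)
    (η₀ α : ℝ) (hη₀ : 0 < η₀) (hα0 : 0 < α) (hα1 : α < 1)
    (hαη : σ < α / η₀)
    (hvoid : ∀ x ∈ Φ, ∃ y ∈ Ψ,
      ‖x - y‖ ≤ tau0 C' γ₀ β σ ((C / C') * (ρ / (β - 1)))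
        ((C / C') * (2 * ν / (β - 2))) η₀ α) :
    ∀ x ∈ Φ, cfDelay ℓ γ₀ m Φ Ψ x ≤ m / Real.logb 2 (1 + η₀) :=
  stmt7_general Φ Ψ σ ρ ν hρ hν hloc hreg ℓ hℓ0 hℓanti C C' r₀ β hC' hCC' hr₀ hβ hℓlb hℓub hΦr₀ γ₀
    hγ₀ m hm η₀ α hη₀ hα1 hαη hvoid
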